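/- arXiv:2512.18023 — 2 statements merged into one kernel-verified Lean document; each statement's English description precedes it below -/
import Mathlib

section
/- If Y has the λ-bounded approximation property and every operator u : K → Y extends to P with norm ≤ C‖u‖ (where K ⊆ P are Banach spaces), then every finite-rank operator u : K → Y admits a finite-rank extension ũ : P → Y with ‖ũ‖ ≤ (λ+ε)C‖u‖ for every ε > 0; consequently every compact operator K → Y admits a compact extension to P. -/
/-!
Extend `u` by some `v₀` with `‖v₀‖ ≤ C‖u‖` and compose with an approximating operator of `Y` that
fixes the finite-dimensional range of `u`: the result is a finite-rank extension of norm
`≤ (λ + ε)C‖u‖`.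

So restriction to `K` maps the finite-rank operators on `P` onto those on `K`, with preimages of
norm at most `(λ + 1)C` times the norm. A compact `u : K → Y` is a limit of finite-rank operators
`u_n` (cover the image of the unit ball by finitely many small balls and apply an approximating
operator fixing their centres). Lifting `u_0` and the increments `u_{n+1} - u_n`, which decay
geometrically, gives a convergent series of finite-rank operators on `P`; its sum is compact and
extends `u`.
-/

open Filter Topology

namespace ContinuousLinearMap

section NormedField

variable {𝕜 E F G : Type*} [NormedField 𝕜]
  [NormedAddCommGroup E] [NormedSpace 𝕜 E] [NormedAddCommGroup F] [NormedSpace 𝕜 F]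
  [NormedAddCommGroup G] [NormedSpace 𝕜 G]

variable (𝕜 E F) in
def finiteRankOperator : Submodule 𝕜 (E →L[𝕜] F) :=
  (LinearMap.finiteRange 𝕜 E F).comap (coeLM 𝕜)

theorem mem_finiteRankOperator {u : E →L[𝕜] F} :
    u ∈ finiteRankOperator 𝕜 E F ↔
      FiniteDimensional 𝕜 (LinearMap.range (u : E →ₗ[𝕜] F)) :=
  IsNoetherian.iff_fg

theorem comp_mem_finiteRankOperator {f : F →L[𝕜] G} (hf : f ∈ finiteRankOperator 𝕜 F G)
    (g : E →L[𝕜] F) : f.comp g ∈ finiteRankOperator 𝕜 E G :=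
  LinearMap.HasNoetherianRange.comp_right hf (g : E →ₗ[𝕜] F)

theorem exists_preimage_mem_topologicalClosure [CompleteSpace E] (T : E →L[𝕜] F)
    {A : Submodule 𝕜 E} {B : Submodule 𝕜 F} {M : ℝ}
    (hlift : ∀ b ∈ B, ∃ a ∈ A, T a = b ∧ ‖a‖ ≤ M * ‖b‖) {b : F}
    (hb : b ∈ B.topologicalClosure) : ∃ a ∈ A.topologicalClosure, T a = b := by
  have happrox : ∀ n : ℕ, ∃ c ∈ B, ‖b - c‖ < (1 / 2 : ℝ) ^ n := fun n => by
    obtain ⟨c, hcB, hbc⟩ := Metric.mem_closure_iff.mp hb ((1 / 2 : ℝ) ^ n) (by positivity)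
    exact ⟨c, hcB, by rwa [← dist_eq_norm]⟩
  choose c hcB hbc using happrox
  have hc_tendsto : Tendsto c atTop (𝓝 b) := by
    rw [tendsto_iff_norm_sub_tendsto_zero]
    refine squeeze_zero (fun _ => norm_nonneg _) (fun n => ?_)
      (tendsto_pow_atTop_nhds_zero_of_lt_one (by norm_num) (by norm_num : (1 / 2 : ℝ) < 1))
    rw [norm_sub_rev]
    exact (hbc n).le
  have hc_step : ∀ n, ‖c (n + 1) - c n‖ ≤ 2 * (1 / 2 : ℝ) ^ n := fun n =>
    calc ‖c (n + 1) - c n‖ = ‖(b - c n) - (b - c (n + 1))‖ := by abel_nf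
      _ ≤ ‖b - c n‖ + ‖b - c (n + 1)‖ := norm_sub_le _ _
      _ ≤ (1 / 2 : ℝ) ^ n + (1 / 2) ^ (n + 1) := add_le_add (hbc n).le (hbc _).le
      _ ≤ 2 * (1 / 2) ^ n := by
        rw [pow_succ]; linarith [pow_pos (by norm_num : (0 : ℝ) < 1 / 2) n]
  obtain ⟨a₀, ha₀A, hTa₀, -⟩ := hlift _ (hcB 0)
  have hd : ∀ n, ∃ a ∈ A, T a = c (n + 1) - c n ∧ ‖a‖ ≤ M * ‖c (n + 1) - c n‖ :=
    fun n => hlift _ (B.sub_mem (hcB _) (hcB n))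
  choose d hdA hTd hd_norm using hd
  have hd_summable : Summable d := by
    refine .of_norm_bounded (summable_geometric_two.mul_left (|M| * 2)) fun n => ?_
    calc ‖d n‖ ≤ M * ‖c (n + 1) - c n‖ := hd_norm n
      _ ≤ |M| * ‖c (n + 1) - c n‖ := by gcongr; exact le_abs_self M
      _ ≤ |M| * (2 * (1 / 2 : ℝ) ^ n) := by gcongr; exact hc_step n
      _ = |M| * 2 * (1 / 2) ^ n := by ring
  set s : ℕ → E := fun N => a₀ + ∑ n ∈ Finset.range N, d n
  have hs_tendsto : Tendsto s atTop (𝓝 (a₀ + ∑' n, d n)) :=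
    tendsto_const_nhds.add hd_summable.hasSum.tendsto_sum_nat
  have hTs : ∀ N, T (s N) = c N := fun N => by
    simp only [s, map_add, map_sum, hTd, Finset.sum_range_sub, hTa₀]
    abel
  have hsA : ∀ N, s N ∈ A := fun N => A.add_mem ha₀A (A.sum_mem fun n _ => hdA n)
  refine ⟨_, A.isClosed_topologicalClosure.mem_of_tendsto hs_tendsto
    (.of_forall fun N => A.le_topologicalClosure (hsA N)), ?_⟩
  refine tendsto_nhds_unique ((T.continuous.tendsto _).comp hs_tendsto) ?_
  simpa only [Function.comp_def, hTs] using hc_tendsto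

end NormedField

section RCLike

variable {𝕜 E F : Type*} [RCLike 𝕜]
  [NormedAddCommGroup E] [NormedSpace 𝕜 E] [NormedAddCommGroup F] [NormedSpace 𝕜 F]

theorem isCompactOperator_of_mem_finiteRankOperator {u : E →L[𝕜] F}
    (hu : u ∈ finiteRankOperator 𝕜 E F) : IsCompactOperator u := by
  have := mem_finiteRankOperator.mp hu
  exact (isCompactOperator_of_locallyCompactSpace_dom
    (u.codRestrict _ (LinearMap.mem_range_self (u : E →ₗ[𝕜] F)))).clm_comp
    (Submodule.subtypeL _)

theorem topologicalClosure_finiteRankOperator_le_compactOperator [CompleteSpace F] :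
    (finiteRankOperator 𝕜 E F).topologicalClosure ≤ compactOperator (RingHom.id 𝕜) E F :=
  Submodule.topologicalClosure_minimal _ (fun _ => isCompactOperator_of_mem_finiteRankOperator)
    isClosed_setOfPred_isCompactOperator

theorem _root_.IsCompactOperator.mem_topologicalClosure_finiteRankOperator {L : ℝ}
    (hF : ∀ S : Submodule 𝕜 F, FiniteDimensional 𝕜 S →
      ∃ f ∈ finiteRankOperator 𝕜 F F, ‖f‖ ≤ L ∧ ∀ y ∈ S, f y = y)
    {u : E →L[𝕜] F} (hu : IsCompactOperator u) :
    u ∈ (finiteRankOperator 𝕜 E F).topologicalClosure := by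
  refine Metric.mem_closure_iff.mpr fun δ hδ => ?_
  set δ' := δ / (|L| + 2)
  have hδ' : 0 < δ' := by positivity
  obtain ⟨t, ht, hcover⟩ := Metric.totallyBounded_iff.mp
    (hu.isCompact_closure_image_closedBall 1).totallyBounded δ' hδ'
  obtain ⟨f, hf, hfL, hft⟩ := hF (Submodule.span 𝕜 t) (FiniteDimensional.span_of_finite 𝕜 ht)
  have hbound : ‖u - f.comp u‖ ≤ (1 + |L|) * δ' :=
    opNorm_le_of_unit_norm (𝕜 := 𝕜) (by positivity) fun x hx => by
      obtain ⟨y, hyt, hy⟩ := Set.mem_iUnion₂.mp (hcover (subset_closure ⟨x, by simp [hx], rfl⟩))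
      rw [Metric.mem_ball, dist_eq_norm] at hy
      have hfy : f y = y := hft y (Submodule.subset_span hyt)
      calc ‖(u - f.comp u) x‖ = ‖(u x - y) - f (u x - y)‖ := by
            simp only [sub_apply, comp_apply, map_sub, hfy]; abel_nf
        _ ≤ ‖u x - y‖ + ‖f‖ * ‖u x - y‖ :=
          (norm_sub_le _ _).trans (by gcongr; exact f.le_opNorm _)
        _ = (1 + ‖f‖) * ‖u x - y‖ := by ring
        _ ≤ (1 + |L|) * δ' := by gcongr; exacts [hfL.trans (le_abs_self L), hy.le]
  refine ⟨f.comp u, comp_mem_finiteRankOperator hf u, ?_⟩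
  calc dist u (f.comp u) = ‖u - f.comp u‖ := dist_eq_norm _ _
    _ ≤ (1 + |L|) * δ' := hbound
    _ < (|L| + 2) * δ' := mul_lt_mul_of_pos_right (by linarith) hδ'
    _ = δ := mul_div_cancel₀ _ (by positivity)

end RCLike

end ContinuousLinearMap

open ContinuousLinearMap

theorem finite_rank_and_compact_extension_general
    {P Y : Type*}
    [NormedAddCommGroup P] [NormedSpace ℝ P]
    [NormedAddCommGroup Y] [NormedSpace ℝ Y] [CompleteSpace Y]
    (K : Submodule ℝ P)
    (lam C : ℝ)
    (hAP : ∀ (F : Submodule ℝ Y), FiniteDimensional ℝ F → ∀ ε > (0 : ℝ),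
      ∃ f : Y →L[ℝ] Y,
        FiniteDimensional ℝ (LinearMap.range (f : Y →ₗ[ℝ] Y)) ∧
        ‖f‖ ≤ lam + ε ∧ ∀ y ∈ F, f y = y)
    (hext : ∀ u : K →L[ℝ] Y,
      ∃ v : P →L[ℝ] Y, (∀ k : K, v k = u k) ∧ ‖v‖ ≤ C * ‖u‖) :
    (∀ ε > (0 : ℝ), ∀ u : K →L[ℝ] Y,
      FiniteDimensional ℝ (LinearMap.range (u : K →ₗ[ℝ] Y)) →
      ∃ v : P →L[ℝ] Y,
        FiniteDimensional ℝ (LinearMap.range (v : P →ₗ[ℝ] Y)) ∧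
        (∀ k : K, v k = u k) ∧ ‖v‖ ≤ (lam + ε) * C * ‖u‖) ∧
    (∀ u : K →L[ℝ] Y, IsCompactOperator u →
      ∃ v : P →L[ℝ] Y, IsCompactOperator v ∧ ∀ k : K, v k = u k) := by
  have finiteRank_extension : ∀ ε > (0 : ℝ), ∀ u ∈ finiteRankOperator ℝ K Y,
      ∃ v ∈ finiteRankOperator ℝ P Y, v.comp K.subtypeL = u ∧ ‖v‖ ≤ (lam + ε) * C * ‖u‖ := by
    intro ε hε u hu
    obtain ⟨v₀, hv₀u, hv₀⟩ := hext u
    obtain ⟨f, hf, hfε, hf_id⟩ := hAP _ (mem_finiteRankOperator.mp hu) ε hε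
    refine ⟨f.comp v₀, comp_mem_finiteRankOperator (mem_finiteRankOperator.mpr hf) v₀,
      ext fun k => ?_, ?_⟩
    · simp only [comp_apply, Submodule.subtypeL_apply, hv₀u]
      exact hf_id _ (LinearMap.mem_range_self _ k)
    · calc ‖f.comp v₀‖ ≤ ‖f‖ * ‖v₀‖ := opNorm_comp_le f v₀
        _ ≤ (lam + ε) * (C * ‖u‖) :=
          mul_le_mul hfε hv₀ (norm_nonneg _) ((norm_nonneg f).trans hfε)
        _ = (lam + ε) * C * ‖u‖ := (mul_assoc ..).symm
  refine ⟨fun ε hε u hu => ?_, fun u hu => ?_⟩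
  · obtain ⟨v, hv, hvu, hv_norm⟩ :=
      finiteRank_extension ε hε u (mem_finiteRankOperator.mpr hu)
    exact ⟨v, mem_finiteRankOperator.mp hv, fun k => congr($hvu k), hv_norm⟩
  · have hu_approx := hu.mem_topologicalClosure_finiteRankOperator (L := lam + 1) fun S hS =>
      let ⟨f, hf, hf_norm, hf_id⟩ := hAP S hS 1 one_pos
      ⟨f, mem_finiteRankOperator.mpr hf, hf_norm, hf_id⟩
    obtain ⟨v, hv, hvu⟩ := exists_preimage_mem_topologicalClosure
      ((compL ℝ K P Y).flip K.subtypeL) (finiteRank_extension 1 one_pos) hu_approx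
    exact ⟨v, topologicalClosure_finiteRankOperator_le_compactOperator hv,
      fun k => congr($hvu k)⟩

/-- If `Y` has the `λ`-bounded approximation property and every operator
`u : K → Y` extends to `P` with norm `≤ C‖u‖`, then every finite-rank operator
`u : K → Y` has a finite-rank extension of norm `≤ (λ+ε)C‖u‖` for every
`ε > 0`; consequently every compact operator `K → Y` admits a compact
extension to `P`. -/
theorem finite_rank_and_compact_extension
    {P Y : Type*}
    [NormedAddCommGroup P] [NormedSpace ℝ P] [CompleteSpace P]
    [NormedAddCommGroup Y] [NormedSpace ℝ Y] [CompleteSpace Y]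
    (K : Submodule ℝ P) (hK : IsClosed (K : Set P))
    (lam C : ℝ) (hlam : 1 ≤ lam) (hC : 0 < C)
    (hAP : ∀ (F : Submodule ℝ Y), FiniteDimensional ℝ F → ∀ ε > (0 : ℝ),
      ∃ f : Y →L[ℝ] Y,
        FiniteDimensional ℝ (LinearMap.range (f : Y →ₗ[ℝ] Y)) ∧
        ‖f‖ ≤ lam + ε ∧ ∀ y ∈ F, f y = y)
    (hext : ∀ u : K →L[ℝ] Y,
      ∃ v : P →L[ℝ] Y, (∀ k : K, v k = u k) ∧ ‖v‖ ≤ C * ‖u‖) :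
    (∀ ε > (0 : ℝ), ∀ u : K →L[ℝ] Y,
      FiniteDimensional ℝ (LinearMap.range (u : K →ₗ[ℝ] Y)) →
      ∃ v : P →L[ℝ] Y,
        FiniteDimensional ℝ (LinearMap.range (v : P →ₗ[ℝ] Y)) ∧
        (∀ k : K, v k = u k) ∧ ‖v‖ ≤ (lam + ε) * C * ‖u‖) ∧
    (∀ u : K →L[ℝ] Y, IsCompactOperator u →
      ∃ v : P →L[ℝ] Y, IsCompactOperator v ∧ ∀ k : K, v k = u k) :=
  finite_rank_and_compact_extension_general K lam C hAP hext
end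

section
/- If Y is complemented in its bidual (an ultrasummand) via a projection π : Y** → Y, K is a closed subspace of the Banach space P, and there is a constant C such that every compact operator u : K → Y with finite-rank-composed form f∘u extends to P with norm ≤ C‖f∘u‖, then every bounded operator u : K → Y admits a bounded extension ũ : P → Y: one takes a weak*-ultrafilter limit ũ(x) = π( w*-lim_𝒰 δ(u_F(x)) ) of extensions u_F of f_F∘u over finite-dimensional subspaces F of Y, where (f_F) witnesses the BAP of Y. -/
/-! Let `S` run over the finite subsets of `Y` and let `f S` be a finite-rank operator of norm
`≤ λ + ε` fixing `span S`. The extensions `w S` of the compact operators `f S ∘ u` are bounded by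
`C (λ + ε) ‖u‖`, so by Banach–Alaoglu the family `δ ∘ w S` has a pointwise weak* limit
`W : P → Y**` along an ultrafilter refining `atTop`. For `k ∈ K` we have `w S k = u k` as soon as
`u k ∈ S`, hence `W k = δ (u k)`, and `π ∘ W` is the required extension. -/

open NormedSpace Filter Topology

section

variable {𝕜 E F ι : Type*} [NontriviallyNormedField 𝕜]
  [NormedAddCommGroup E] [NormedSpace 𝕜 E] [NormedAddCommGroup F] [NormedSpace 𝕜 F]

theorem ContinuousLinearMap.isCompactOperator_of_finiteDimensional_range
    [LocallyCompactSpace 𝕜] (f : E →L[𝕜] F)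
    [FiniteDimensional 𝕜 (LinearMap.range (f : E →ₗ[𝕜] F))] : IsCompactOperator f :=
  have := FiniteDimensional.proper 𝕜 (LinearMap.range (f : E →ₗ[𝕜] F))
  (isCompactOperator_of_locallyCompactSpace_dom
    (f.codRestrict _ (LinearMap.mem_range_self (f : E →ₗ[𝕜] F)))).clm_comp
    (LinearMap.range (f : E →ₗ[𝕜] F)).subtypeL

/-- Banach–Alaoglu, read along an ultrafilter. -/
theorem ContinuousLinearMap.exists_norm_le_tendsto_apply [ProperSpace F] (𝒰 : Ultrafilter ι)
    (g : ι → E →L[𝕜] F) {r : ℝ} (hg : ∀ i, ‖g i‖ ≤ r) :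
    ∃ g₀ : E →L[𝕜] F, ‖g₀‖ ≤ r ∧ ∀ x, Tendsto (fun i => g i x) 𝒰 (𝓝 (g₀ x)) := by
  have hmem : ∀ i, ⇑(g i) ∈ ((↑) : (E →L[𝕜] F) → E → F) '' Metric.closedBall 0 r :=
    fun i => ⟨g i, mem_closedBall_zero_iff.2 (hg i), rfl⟩
  obtain ⟨_, ⟨g₀, hg₀, rfl⟩, hlim⟩ := (isCompact_image_coe_closedBall 0 r).ultrafilter_le_nhds
    (𝒰.map fun i => ⇑(g i)) (le_principal_iff.2 (Ultrafilter.mem_map.2 (univ_mem' hmem)))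
  exact ⟨g₀, mem_closedBall_zero_iff.1 hg₀, tendsto_pi_nhds.1 hlim⟩

theorem ContinuousLinearMap.exists_weakStar_tendsto_of_norm_le [ProperSpace 𝕜]
    (𝒰 : Ultrafilter ι) (w : ι → E →L[𝕜] F) {B : ℝ} (hw : ∀ i, ‖w i‖ ≤ B) :
    ∃ W : E →L[𝕜] StrongDual 𝕜 (StrongDual 𝕜 F), (∀ x, ‖W x‖ ≤ B * ‖x‖) ∧
      ∀ x φ, Tendsto (fun i => φ (w i x)) 𝒰 (𝓝 (W x φ)) := by
  choose W hW_norm hW using fun x => exists_norm_le_tendsto_apply 𝒰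
    (fun i => inclusionInDoubleDual 𝕜 F (w i x))
    (fun i => (double_dual_bound 𝕜 F _).trans ((w i).le_of_opNorm_le (hw i) x))
  have hW_add (x y : E) : W (x + y) = W x + W y := ext fun φ =>
    tendsto_nhds_unique (hW (x + y) φ) (by simpa using (hW x φ).add (hW y φ))
  have hW_smul (c : 𝕜) (x : E) : W (c • x) = c • W x := ext fun φ =>
    tendsto_nhds_unique (hW (c • x) φ) (by simpa using (hW x φ).const_mul c)
  exact ⟨LinearMap.mkContinuous ⟨⟨W, hW_add⟩, hW_smul⟩ B hW_norm, hW_norm, hW⟩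

theorem NormedSpace.eq_inclusionInDoubleDual_of_tendsto {l : Filter ι} [l.NeBot] {v : ι → F}
    {z : StrongDual 𝕜 (StrongDual 𝕜 F)} {y : F}
    (hz : ∀ φ : StrongDual 𝕜 F, Tendsto (fun i => φ (v i)) l (𝓝 (z φ)))
    (hv : ∀ᶠ i in l, v i = y) : z = inclusionInDoubleDual 𝕜 F y :=
  ContinuousLinearMap.ext fun φ =>
    tendsto_nhds_unique (hz φ) (tendsto_const_nhds.congr' (hv.mono fun i hi => by simp [hi]))

end

theorem ultrasummand_bounded_extension_general
    {P Y : Type*}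
    [NormedAddCommGroup P] [NormedSpace ℝ P]
    [NormedAddCommGroup Y] [NormedSpace ℝ Y]
    (K : Submodule ℝ P)
    (π : StrongDual ℝ (StrongDual ℝ Y) →L[ℝ] Y)
    (hπ : ∀ y : Y, π (inclusionInDoubleDual ℝ Y y) = y)
    (lam C : ℝ) (hC : 0 < C)
    (hAP : ∀ (F : Submodule ℝ Y), FiniteDimensional ℝ F → ∀ ε > (0 : ℝ),
      ∃ f : Y →L[ℝ] Y,
        FiniteDimensional ℝ (LinearMap.range (f : Y →ₗ[ℝ] Y)) ∧
        ‖f‖ ≤ lam + ε ∧ ∀ y ∈ F, f y = y)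
    (hext : ∀ v : K →L[ℝ] Y, IsCompactOperator v →
      ∃ w : P →L[ℝ] Y, (∀ k : K, w k = v k) ∧ ‖w‖ ≤ C * ‖v‖) :
    ∀ u : K →L[ℝ] Y, ∀ ε > (0 : ℝ),
      ∃ v : P →L[ℝ] Y, (∀ k : K, v k = u k) ∧
        ‖v‖ ≤ @norm _ (ContinuousLinearMap.hasOpNorm (𝕜 := ℝ) (𝕜₂ := ℝ) (σ₁₂ := RingHom.id ℝ)
          (E := StrongDual ℝ (StrongDual ℝ Y)) (F := Y)) π * C * (lam + ε) * ‖u‖ := by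
  intro u ε hε
  choose f hf_range hf_norm hf_id using fun S : Finset Y =>
    hAP (Submodule.span ℝ S) inferInstance ε hε
  have hfu_compact (S : Finset Y) : IsCompactOperator ((f S).comp u) :=
    have := hf_range S
    (f S).isCompactOperator_of_finiteDimensional_range.comp_clm u
  choose w hw_ext hw_norm using fun S => hext _ (hfu_compact S)
  have hw_bound (S : Finset Y) : ‖w S‖ ≤ C * (lam + ε) * ‖u‖ := calc
    ‖w S‖ ≤ C * (‖f S‖ * ‖u‖) := (hw_norm S).trans (by gcongr; exact (f S).opNorm_comp_le u)
    _ ≤ C * (lam + ε) * ‖u‖ := by rw [← mul_assoc]; gcongr; exact hf_norm S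
  obtain ⟨W, hW_norm, hW⟩ := ContinuousLinearMap.exists_weakStar_tendsto_of_norm_le
    (Ultrafilter.of (atTop : Filter (Finset Y))) w hw_bound
  have hW_K (k : K) : W k = inclusionInDoubleDual ℝ Y (u k) :=
    eq_inclusionInDoubleDual_of_tendsto (hW k) <| Ultrafilter.of_le _ <|
      (eventually_ge_atTop {u k}).mono fun S hS => by
        rw [hw_ext, ContinuousLinearMap.comp_apply,
          hf_id S _ (Submodule.subset_span (hS (Finset.mem_singleton_self _)))]
  -- The bidual carries `ContinuousLinearMap.topologicalSpace` rather than its norm topology, so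
  -- the operator-norm lemmas for `π` only elaborate with their implicit arguments given.
  have hπ_nonneg := ContinuousLinearMap.opNorm_nonneg (𝕜 := ℝ) (𝕜₂ := ℝ) (σ₁₂ := RingHom.id ℝ)
    (E := StrongDual ℝ (StrongDual ℝ Y)) (F := Y) π
  have hπ_le := ContinuousLinearMap.le_opNorm (𝕜 := ℝ) (𝕜₂ := ℝ) (σ₁₂ := RingHom.id ℝ)
    (E := StrongDual ℝ (StrongDual ℝ Y)) (F := Y) π
  have hlam : 0 ≤ lam + ε := (norm_nonneg _).trans (hf_norm ∅)
  refine ⟨π.comp W, fun k => by rw [ContinuousLinearMap.comp_apply, hW_K, hπ],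
    (π.comp W).opNorm_le_bound (by positivity) fun x => ?_⟩
  calc ‖π (W x)‖ ≤ _ := hπ_le (W x)
    _ ≤ _ := mul_le_mul_of_nonneg_left (hW_norm x) hπ_nonneg
    _ = _ := by ring

/-- If `Y` is an ultrasummand (complemented in its bidual via a projection `π`),
`Y` has the `λ`-AP, `K` is a closed subspace of `P`, and there is a constant
`C` such that every compact operator `K → Y` extends to `P` with norm control
`C`, then every bounded operator `u : K → Y` admits a bounded extension
`ũ : P → Y` with `ũ|_K = u` and `‖ũ‖ ≤ ‖π‖·C·(λ+ε)·‖u‖` for every `ε > 0`. -/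
theorem ultrasummand_bounded_extension
    {P Y : Type*}
    [NormedAddCommGroup P] [NormedSpace ℝ P] [CompleteSpace P]
    [NormedAddCommGroup Y] [NormedSpace ℝ Y] [CompleteSpace Y]
    (K : Submodule ℝ P) (hK : IsClosed (K : Set P))
    (π : StrongDual ℝ (StrongDual ℝ Y) →L[ℝ] Y)
    (hπ : ∀ y : Y, π (inclusionInDoubleDual ℝ Y y) = y)
    (lam C : ℝ) (hlam : 1 ≤ lam) (hC : 0 < C)
    (hAP : ∀ (F : Submodule ℝ Y), FiniteDimensional ℝ F → ∀ ε > (0 : ℝ),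
      ∃ f : Y →L[ℝ] Y,
        FiniteDimensional ℝ (LinearMap.range (f : Y →ₗ[ℝ] Y)) ∧
        ‖f‖ ≤ lam + ε ∧ ∀ y ∈ F, f y = y)
    (hext : ∀ v : K →L[ℝ] Y, IsCompactOperator v →
      ∃ w : P →L[ℝ] Y, (∀ k : K, w k = v k) ∧ ‖w‖ ≤ C * ‖v‖) :
    ∀ u : K →L[ℝ] Y, ∀ ε > (0 : ℝ),
      ∃ v : P →L[ℝ] Y, (∀ k : K, v k = u k) ∧
        ‖v‖ ≤ @norm _ (ContinuousLinearMap.hasOpNorm (𝕜 := ℝ) (𝕜₂ := ℝ) (σ₁₂ := RingHom.id ℝ)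
          (E := StrongDual ℝ (StrongDual ℝ Y)) (F := Y)) π * C * (lam + ε) * ‖u‖ :=
  ultrasummand_bounded_extension_general K π hπ lam C hC hAP hext
end
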